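/- arXiv:2212.13804 — 5 statements merged into one kernel-verified Lean document; each statement's English description precedes it below -/
import Mathlib

section
/- Corollary 1 (exact potential function). For every user k, every power profile ρ : Fin K → ℝ with all entries positive, and every alternative positive power ρ'_k for user k, the change of the potential equals the change of user k's payoff: u(Function.update ρ k ρ'_k) − u(ρ) = μ_k(Function.update ρ k ρ'_k) − μ_k(ρ). Hence u is an exact potential function for the parameterized power-control game G(α). -/
/-- ξ k = ρ k * (b k)^α -/
noncomputable def xi (K : ℕ) (α : ℝ) (b ρ : Fin K → ℝ) (k : Fin K) : ℝ :=
  ρ k * b k ^ α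

/-- Payoff of user k: μ_k(ρ) = (Σ_{i ≠ k} ξ i) / ξ k + ξ k * Σ_{i ≠ k} 1 / ξ i -/
noncomputable def mu (K : ℕ) (α : ℝ) (b ρ : Fin K → ℝ) (k : Fin K) : ℝ :=
  (∑ i ∈ Finset.univ.erase k, xi K α b ρ i) / xi K α b ρ k
    + xi K α b ρ k * ∑ i ∈ Finset.univ.erase k, 1 / xi K α b ρ i

/-- Potential function u(ρ) = (1/2) * Σ_k μ_k(ρ) -/
noncomputable def potential (K : ℕ) (α : ℝ) (b ρ : Fin K → ℝ) : ℝ :=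
  (1 / 2) * ∑ k, mu K α b ρ k

/-- Symmetric pairwise term. -/
noncomputable def pw (K : ℕ) (α : ℝ) (b ρ : Fin K → ℝ) (j i : Fin K) : ℝ :=
  xi K α b ρ i / xi K α b ρ j + xi K α b ρ j / xi K α b ρ i

lemma pw_symm (K : ℕ) (α : ℝ) (b ρ : Fin K → ℝ) (j i : Fin K) :
    pw K α b ρ j i = pw K α b ρ i j := by
  unfold pw; ring

lemma mu_eq (K : ℕ) (α : ℝ) (b ρ : Fin K → ℝ) (k : Fin K) :
    mu K α b ρ k = ∑ i ∈ Finset.univ.erase k, pw K α b ρ k i := by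
  unfold mu pw
  rw [Finset.sum_div, Finset.mul_sum, ← Finset.sum_add_distrib]
  exact Finset.sum_congr rfl fun i _ => by rw [mul_one_div]

lemma sum_mu (K : ℕ) (α : ℝ) (b ρ : Fin K → ℝ) (k : Fin K) :
    ∑ j, mu K α b ρ j
      = 2 * mu K α b ρ k
        + ∑ j ∈ Finset.univ.erase k, ∑ i ∈ (Finset.univ.erase k).erase j,
            pw K α b ρ j i := by
  calc ∑ j, mu K α b ρ j
      = mu K α b ρ k + ∑ j ∈ Finset.univ.erase k, mu K α b ρ j := by
        rw [Finset.add_sum_erase _ _ (Finset.mem_univ k)]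
    _ = mu K α b ρ k + ∑ j ∈ Finset.univ.erase k,
          (pw K α b ρ j k + ∑ i ∈ (Finset.univ.erase k).erase j, pw K α b ρ j i) := by
        congr 1
        refine Finset.sum_congr rfl fun j hj => ?_
        have hjk : j ≠ k := Finset.ne_of_mem_erase hj
        rw [mu_eq]
        rw [← Finset.add_sum_erase _ _ (Finset.mem_erase.mpr ⟨hjk.symm, Finset.mem_univ k⟩),
          Finset.erase_right_comm]
    _ = 2 * mu K α b ρ k + ∑ j ∈ Finset.univ.erase k,
          ∑ i ∈ (Finset.univ.erase k).erase j, pw K α b ρ j i := by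
        rw [Finset.sum_add_distrib]
        have : ∑ j ∈ Finset.univ.erase k, pw K α b ρ j k = mu K α b ρ k := by
          rw [mu_eq]
          exact Finset.sum_congr rfl fun j _ => pw_symm K α b ρ j k
        rw [this]; ring

/-- Corollary 1: u is an exact potential function for the game G(α). -/
theorem exact_potential (K : ℕ) (hK : 2 ≤ K) (α : ℝ) (b : Fin K → ℝ)
    (hb : ∀ k, 0 < b k) (k : Fin K) (ρ : Fin K → ℝ) (hρ : ∀ i, 0 < ρ i)
    (ρ'k : ℝ) (hρ'k : 0 < ρ'k) :
    potential K α b (Function.update ρ k ρ'k) - potential K α b ρ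
      = mu K α b (Function.update ρ k ρ'k) k - mu K α b ρ k := by
  have hrest : ∑ j ∈ Finset.univ.erase k, ∑ i ∈ (Finset.univ.erase k).erase j,
      pw K α b (Function.update ρ k ρ'k) j i
      = ∑ j ∈ Finset.univ.erase k, ∑ i ∈ (Finset.univ.erase k).erase j,
      pw K α b ρ j i := by
    refine Finset.sum_congr rfl fun j hj => Finset.sum_congr rfl fun i hi => ?_
    have hjk : j ≠ k := Finset.ne_of_mem_erase hj
    have hik : i ≠ k := Finset.ne_of_mem_erase (Finset.mem_of_mem_erase hi)
    unfold pw xi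
    rw [Function.update_of_ne hjk, Function.update_of_ne hik]
  unfold potential
  rw [sum_mu K α b (Function.update ρ k ρ'k) k, sum_mu K α b ρ k, hrest]
  ring
end

section
/- Closed-form best response (equation (9)). Fix a user k and positive powers ρ_i > 0 for all i ≠ k. Let ρ*_k = sqrt( (Σ_{i ≠ k} ρ_i (b i)^α) / (Σ_{i ≠ k} (b k)^{2α} / (ρ_i (b i)^α)) ). Then ρ*_k > 0 and ρ*_k is the unique global minimizer of x ↦ μ_k(Function.update ρ k x) over the positive reals: μ_k(Function.update ρ k ρ*_k) ≤ μ_k(Function.update ρ k x) for all x > 0, with equality only when x = ρ*_k. -/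
/-!
On user `k`'s own axis the payoff is `y ↦ S / y + y * T` in `y = ξ k`, with `S = Σ_{i ≠ k} ξ i`
and `T = Σ_{i ≠ k} 1 / ξ i`. Whenever `z ^ 2 * T = S` this function exceeds its value at `z` by
exactly `T * (y - z) ^ 2 / y`, so `z = sqrt (S / T)` is its strict global minimizer on `y > 0`.
-/

lemma div_add_mul_sub_div_add_mul {S T y z : ℝ} (hy : y ≠ 0) (h : z ^ 2 * T = S) :
    (S / y + y * T) - (S / z + z * T) = T * (y - z) ^ 2 / y := by
  subst h
  field_simp
  ring

lemma div_add_mul_lt_of_ne {S T y z : ℝ} (hT : 0 < T) (hy : 0 < y) (h : z ^ 2 * T = S)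
    (hyz : y ≠ z) : S / z + z * T < S / y + y * T := by
  have hgap : 0 < T * (y - z) ^ 2 / y :=
    div_pos (mul_pos hT (sq_pos_of_ne_zero (sub_ne_zero.2 hyz))) hy
  linarith [div_add_mul_sub_div_add_mul hy.ne' h]

lemma sq_sqrt_div_mul_sq_mul {S T c : ℝ} (hS : 0 ≤ S) (hc : c ≠ 0) (hT : 0 < T) :
    (Real.sqrt (S / (c ^ 2 * T)) * c) ^ 2 * T = S := by
  rw [mul_pow, Real.sq_sqrt (div_nonneg hS (by positivity))]
  field_simp

lemma mu_update_self (K : ℕ) (α : ℝ) (b ρ : Fin K → ℝ) (k : Fin K) (x : ℝ) :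
    mu K α b (Function.update ρ k x) k =
      (∑ i ∈ Finset.univ.erase k, ρ i * b i ^ α) / (x * b k ^ α)
        + x * b k ^ α * ∑ i ∈ Finset.univ.erase k, 1 / (ρ i * b i ^ α) := by
  have hupd : ∀ i ∈ Finset.univ.erase k, xi K α b (Function.update ρ k x) i = ρ i * b i ^ α :=
    fun i hi => by rw [xi, Function.update_of_ne (Finset.ne_of_mem_erase hi)]
  rw [mu, Finset.sum_congr rfl hupd,
    Finset.sum_congr rfl fun i hi => congrArg (1 / ·) (hupd i hi), xi, Function.update_self]

lemma sum_rpow_two_mul_div {β a : ℝ} {ι : Type*} {s : Finset ι} {f : ι → ℝ} (hβ : 0 < β) :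
    ∑ i ∈ s, β ^ (2 * a) / f i = (β ^ a) ^ 2 * ∑ i ∈ s, 1 / f i := by
  rw [mul_comm 2 a, Real.rpow_mul hβ.le, Real.rpow_two, Finset.mul_sum]
  simp only [mul_one_div]

/-- Closed-form best response (equation (9)): ρ*_k is the unique global
    minimizer of user k's payoff over its own positive powers. -/
theorem best_response_closed_form (K : ℕ) (hK : 2 ≤ K) (α : ℝ)
    (b : Fin K → ℝ) (hb : ∀ k, 0 < b k) (k : Fin K) (ρ : Fin K → ℝ)
    (hρ : ∀ i, i ≠ k → 0 < ρ i) :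
    0 < Real.sqrt ((∑ i ∈ Finset.univ.erase k, ρ i * b i ^ α) /
        (∑ i ∈ Finset.univ.erase k, b k ^ (2 * α) / (ρ i * b i ^ α))) ∧
    (∀ x : ℝ, 0 < x →
      mu K α b (Function.update ρ k
        (Real.sqrt ((∑ i ∈ Finset.univ.erase k, ρ i * b i ^ α) /
          (∑ i ∈ Finset.univ.erase k, b k ^ (2 * α) / (ρ i * b i ^ α))))) k
        ≤ mu K α b (Function.update ρ k x) k) ∧
    (∀ x : ℝ, 0 < x →
      mu K α b (Function.update ρ k
        (Real.sqrt ((∑ i ∈ Finset.univ.erase k, ρ i * b i ^ α) /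
          (∑ i ∈ Finset.univ.erase k, b k ^ (2 * α) / (ρ i * b i ^ α))))) k
        = mu K α b (Function.update ρ k x) k →
      x = Real.sqrt ((∑ i ∈ Finset.univ.erase k, ρ i * b i ^ α) /
          (∑ i ∈ Finset.univ.erase k, b k ^ (2 * α) / (ρ i * b i ^ α)))) := by
  set c := b k ^ α
  set S := ∑ i ∈ Finset.univ.erase k, ρ i * b i ^ α
  set T := ∑ i ∈ Finset.univ.erase k, 1 / (ρ i * b i ^ α)
  have hc : 0 < c := Real.rpow_pos_of_pos (hb k) α
  have hne : (Finset.univ.erase k).Nonempty :=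
    (Finset.univ_nontrivial_iff.2 (Fin.nontrivial_iff_two_le.2 hK)).erase_nonempty
  have hξ : ∀ i ∈ Finset.univ.erase k, 0 < ρ i * b i ^ α := fun i hi =>
    mul_pos (hρ i (Finset.ne_of_mem_erase hi)) (Real.rpow_pos_of_pos (hb i) α)
  have hS : 0 < S := Finset.sum_pos hξ hne
  have hT : 0 < T := Finset.sum_pos (fun i hi => one_div_pos.2 (hξ i hi)) hne
  rw [sum_rpow_two_mul_div (hb k)]
  set r := Real.sqrt (S / (c ^ 2 * T))
  have hr : 0 < r := Real.sqrt_pos.2 (by positivity)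
  have hrc : (r * c) ^ 2 * T = S := sq_sqrt_div_mul_sq_mul hS.le hc.ne' hT
  have hlt : ∀ x, 0 < x → x ≠ r → mu K α b (Function.update ρ k r) k
      < mu K α b (Function.update ρ k x) k := fun x hx hxr => by
    simp only [mu_update_self]
    exact div_add_mul_lt_of_ne hT (mul_pos hx hc) hrc (mul_left_injective₀ hc.ne' |>.ne hxr)
  refine ⟨hr, fun x hx => ?_, fun x hx heq => ?_⟩
  · rcases eq_or_ne x r with rfl | hxr
    · exact le_rfl
    · exact (hlt x hx hxr).le
  · by_contra hxr
    exact (hlt x hx hxr).ne heq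
end

section
/- Constant-ξ profiles are Nash equilibria of the unconstrained game. Suppose the power profile ρ : Fin K → ℝ has all entries positive and there is a constant c > 0 with ξ k = ρ k * (b k)^α = c for every user k. Then for every user k and every x > 0, μ_k(ρ) ≤ μ_k(Function.update ρ k x); in particular (taking α = 0 and ρ k = P_max for all k), when α = 0 the full-power profile is a Nash equilibrium and no user has an incentive to deviate. -/
/-! User `k`'s payoff depends on its own power only through `t = ξ k`. When every other user
has `ξ i = c`, it equals `(K - 1) (c / t + t / c)`, which by AM-GM is minimal exactly at
`t = c`. -/

lemma two_le_div_add_div {c t : ℝ} (hc : 0 < c) (ht : 0 < t) : 2 ≤ c / t + t / c := by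
  rw [div_add_div _ _ ht.ne' hc.ne', le_div_iff₀ (by positivity)]
  nlinarith [sq_nonneg (c - t)]

section Payoff

variable {K : ℕ} {α : ℝ} {b ρ : Fin K → ℝ}

lemma xi_update_self (k : Fin K) (x : ℝ) :
    xi K α b (Function.update ρ k x) k = x * b k ^ α := by
  simp [xi]

lemma xi_update_of_ne {i k : Fin K} (hik : i ≠ k) (x : ℝ) :
    xi K α b (Function.update ρ k x) i = xi K α b ρ i := by
  simp [xi, Function.update_of_ne hik]

lemma mu_eq_of_forall_ne_xi_eq {k : Fin K} {c : ℝ} (h : ∀ i ≠ k, xi K α b ρ i = c) :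
    mu K α b ρ k = (K - 1 : ℕ) * (c / xi K α b ρ k + xi K α b ρ k / c) := by
  have hcard : (Finset.univ.erase k).card = K - 1 := by simp [Finset.card_erase_of_mem]
  have hsum (f : ℝ → ℝ) : ∑ i ∈ Finset.univ.erase k, f (xi K α b ρ i) = (K - 1 : ℕ) * f c := by
    rw [Finset.sum_congr rfl fun i hi => by rw [h i (Finset.ne_of_mem_erase hi)],
      Finset.sum_const, hcard, nsmul_eq_mul]
  have hsum_xi := hsum fun t => t
  have hsum_inv := hsum fun t => 1 / t
  beta_reduce at hsum_xi hsum_inv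
  rw [mu, hsum_xi, hsum_inv]
  ring

lemma mu_le_mu_update_of_xi_eq_const {k : Fin K} (hbk : 0 < b k) {c : ℝ} (hc : 0 < c)
    (hconst : ∀ i, xi K α b ρ i = c) {x : ℝ} (hx : 0 < x) :
    mu K α b ρ k ≤ mu K α b (Function.update ρ k x) k := by
  have hothers : ∀ i ≠ k, xi K α b (Function.update ρ k x) i = c := fun i hik =>
    (xi_update_of_ne hik x).trans (hconst i)
  rw [mu_eq_of_forall_ne_xi_eq fun i _ => hconst i, mu_eq_of_forall_ne_xi_eq hothers, hconst k,
    xi_update_self, div_self hc.ne', one_add_one_eq_two]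
  gcongr
  exact two_le_div_add_div hc (by positivity)

end Payoff

theorem constant_xi_is_nash_general (K : ℕ) (α : ℝ) (b : Fin K → ℝ)
    (hb : ∀ k, 0 < b k) (ρ : Fin K → ℝ)
    (c : ℝ) (hc : 0 < c) (hconst : ∀ k, xi K α b ρ k = c) :
    (∀ (k : Fin K), ∀ x : ℝ, 0 < x →
      mu K α b ρ k ≤ mu K α b (Function.update ρ k x) k) ∧
    (∀ Pmax : ℝ, 0 < Pmax → ∀ (k : Fin K), ∀ x : ℝ, 0 < x →
      mu K 0 b (fun _ => Pmax) k
        ≤ mu K 0 b (Function.update (fun _ => Pmax) k x) k) :=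
  ⟨fun k _ hx => mu_le_mu_update_of_xi_eq_const (hb k) hc hconst hx,
    fun _ hP k _ hx => mu_le_mu_update_of_xi_eq_const (hb k) hP (fun _ => by simp [xi]) hx⟩

/-- Constant-ξ profiles are Nash equilibria of the unconstrained game; in
    particular, when α = 0 the full-power profile is a Nash equilibrium. -/
theorem constant_xi_is_nash (K : ℕ) (hK : 2 ≤ K) (α : ℝ) (b : Fin K → ℝ)
    (hb : ∀ k, 0 < b k) (ρ : Fin K → ℝ) (hρ : ∀ k, 0 < ρ k)
    (c : ℝ) (hc : 0 < c) (hconst : ∀ k, xi K α b ρ k = c) :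
    (∀ (k : Fin K), ∀ x : ℝ, 0 < x →
      mu K α b ρ k ≤ mu K α b (Function.update ρ k x) k) ∧
    (∀ Pmax : ℝ, 0 < Pmax → ∀ (k : Fin K), ∀ x : ℝ, 0 < x →
      mu K 0 b (fun _ => Pmax) k
        ≤ mu K 0 b (Function.update (fun _ => Pmax) k x) k) :=
  constant_xi_is_nash_general K α b hb ρ c hc hconst
end

section
/- Characterization of the minimizers of the potential function. For every power profile ρ : Fin K → ℝ with all entries positive, the potential satisfies u(ρ) ≥ K * (K − 1), and equality holds if and only if ξ i = ξ j for all users i, j; consequently the global minimizers of u over the set of profiles with all entries positive are exactly the profiles for which ρ k * (b k)^α is constant in k. -/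
lemma amgm_pair (x y : ℝ) (hx : 0 < x) (hy : 0 < y) :
    1 ≤ (x / y + y / x) / 2 ∧ ((x / y + y / x) / 2 = 1 ↔ x = y) := by
  have hxy : 0 < x * y := mul_pos hx hy
  have key : (x / y + y / x) / 2 - 1 = (x - y) ^ 2 / (2 * (x * y)) := by
    field_simp; ring
  constructor
  · nlinarith [sq_nonneg (x - y), div_nonneg (sq_nonneg (x - y)) (by linarith : (0:ℝ) ≤ 2 * (x * y))]
  · constructor
    · intro h
      have h0 : (x - y) ^ 2 / (2 * (x * y)) = 0 := by rw [← key, h]; ring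
      have h1 : (x - y) ^ 2 = 0 := by
        rcases div_eq_zero_iff.mp h0 with h | h
        · exact h
        · linarith
      have := pow_eq_zero_iff (n := 2) (by norm_num) |>.mp h1
      linarith
    · intro h
      subst h
      rw [div_self hy.ne']
      norm_num

lemma potential_bound (K : ℕ) (hK : 2 ≤ K) (α : ℝ)
    (b : Fin K → ℝ) (hb : ∀ k, 0 < b k) (ρ : Fin K → ℝ) (hρ : ∀ i, 0 < ρ i) :
    (K : ℝ) * ((K : ℝ) - 1) ≤ potential K α b ρ ∧
    (potential K α b ρ = (K : ℝ) * ((K : ℝ) - 1) ↔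
      ∀ i j, xi K α b ρ i = xi K α b ρ j) := by
  set ξ := xi K α b ρ with hξdef
  have hξ : ∀ k, 0 < ξ k := fun k => mul_pos (hρ k) (Real.rpow_pos_of_pos (hb k) α)
  set t : Fin K → Fin K → ℝ := fun k i => (ξ i / ξ k + ξ k / ξ i) / 2 with ht
  have hcard : ∀ k : Fin K, ((Finset.univ.erase k).card : ℝ) = (K : ℝ) - 1 := by
    intro k
    rw [Finset.card_erase_of_mem (Finset.mem_univ k), Finset.card_univ, Fintype.card_fin]
    have : 1 ≤ K := by omega
    push_cast [Nat.cast_sub this]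
    ring
  have hpot : potential K α b ρ = ∑ k, ∑ i ∈ Finset.univ.erase k, t k i := by
    unfold potential mu
    rw [Finset.mul_sum]
    refine Finset.sum_congr rfl fun k _ => ?_
    rw [Finset.sum_div, Finset.mul_sum, ← Finset.sum_add_distrib, Finset.mul_sum]
    refine Finset.sum_congr rfl fun i _ => ?_
    simp only [ht, hξdef]
    ring
  have hterm : ∀ k i, 1 ≤ t k i := fun k i => (amgm_pair _ _ (hξ i) (hξ k)).1
  have hterm_eq : ∀ k i, t k i = 1 ↔ ξ i = ξ k := fun k i =>
    (amgm_pair _ _ (hξ i) (hξ k)).2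
  set g : Fin K → ℝ := fun k => ∑ i ∈ Finset.univ.erase k, t k i with hg
  have hglb : ∀ k, (K : ℝ) - 1 ≤ g k := by
    intro k
    calc (K : ℝ) - 1 = ∑ _i ∈ Finset.univ.erase k, (1 : ℝ) := by
          rw [Finset.sum_const, nsmul_eq_mul, mul_one, hcard]
      _ ≤ g k := Finset.sum_le_sum fun i _ => hterm k i
  have hlb : (K : ℝ) * ((K : ℝ) - 1) ≤ potential K α b ρ := by
    rw [hpot]
    calc (K : ℝ) * ((K : ℝ) - 1) = ∑ _k : Fin K, ((K : ℝ) - 1) := by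
          rw [Finset.sum_const, nsmul_eq_mul, Finset.card_univ, Fintype.card_fin]
      _ ≤ ∑ k, g k := Finset.sum_le_sum fun k _ => hglb k
  refine ⟨hlb, ?_, ?_⟩
  · intro heq
    have hsum0 : ∑ k : Fin K, (g k - ((K : ℝ) - 1)) = 0 := by
      rw [Finset.sum_sub_distrib, Finset.sum_const, nsmul_eq_mul, Finset.card_univ,
        Fintype.card_fin, ← hpot, heq]
      ring
    have hgk : ∀ k, g k = (K : ℝ) - 1 := by
      intro k
      have := (Finset.sum_eq_zero_iff_of_nonneg
        (fun k _ => by linarith [hglb k])).mp hsum0 k (Finset.mem_univ k)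
      linarith
    have hteq : ∀ k, ∀ i ∈ Finset.univ.erase k, t k i = 1 := by
      intro k
      have hsum0' : ∑ i ∈ Finset.univ.erase k, (t k i - 1) = 0 := by
        rw [Finset.sum_sub_distrib, Finset.sum_const, nsmul_eq_mul, mul_one, hcard,
          show (∑ i ∈ Finset.univ.erase k, t k i) = g k from rfl, hgk k]
        ring
      intro i hi
      have := (Finset.sum_eq_zero_iff_of_nonneg
        (fun i _ => by linarith [hterm k i])).mp hsum0' i hi
      linarith
    intro i j
    by_cases hij : i = j
    · rw [hij]
    · exact (hterm_eq j i).mp (hteq j i (Finset.mem_erase.mpr ⟨hij, Finset.mem_univ i⟩))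
  · intro hconst
    rw [hpot]
    have : ∀ k, g k = (K : ℝ) - 1 := by
      intro k
      calc g k = ∑ _i ∈ Finset.univ.erase k, (1 : ℝ) :=
            Finset.sum_congr rfl fun i _ => (hterm_eq k i).mpr (hconst i k)
        _ = (K : ℝ) - 1 := by rw [Finset.sum_const, nsmul_eq_mul, mul_one, hcard]
    calc ∑ k, g k = ∑ _k : Fin K, ((K : ℝ) - 1) := Finset.sum_congr rfl fun k _ => this k
      _ = (K : ℝ) * ((K : ℝ) - 1) := by
          rw [Finset.sum_const, nsmul_eq_mul, Finset.card_univ, Fintype.card_fin]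

/-- Characterization of the minimizers of the potential: u(ρ) ≥ K(K−1), with
    equality iff ξ is constant; the global minimizers of u over positive
    profiles are exactly the profiles with ρ k * (b k)^α constant in k. -/
theorem potential_minimizers_characterization (K : ℕ) (hK : 2 ≤ K) (α : ℝ)
    (b : Fin K → ℝ) (hb : ∀ k, 0 < b k) (ρ : Fin K → ℝ) (hρ : ∀ i, 0 < ρ i) :
    (K : ℝ) * ((K : ℝ) - 1) ≤ potential K α b ρ ∧
    (potential K α b ρ = (K : ℝ) * ((K : ℝ) - 1) ↔
      ∀ i j, xi K α b ρ i = xi K α b ρ j) ∧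
    ((∀ ρ' : Fin K → ℝ, (∀ i, 0 < ρ' i) →
        potential K α b ρ ≤ potential K α b ρ') ↔
      ∃ c : ℝ, ∀ k, ρ k * b k ^ α = c) := by
  obtain ⟨hlb, hiff⟩ := potential_bound K hK α b hb ρ hρ
  refine ⟨hlb, hiff, ?_, ?_⟩
  · intro hmin
    set ρ' : Fin K → ℝ := fun k => (b k ^ α)⁻¹ with hρ'def
    have hρ'pos : ∀ i, 0 < ρ' i := fun i =>
      inv_pos.mpr (Real.rpow_pos_of_pos (hb i) α)
    have hξ' : ∀ k, xi K α b ρ' k = 1 := fun k =>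
      inv_mul_cancel₀ (Real.rpow_pos_of_pos (hb k) α).ne'
    obtain ⟨_, hiff'⟩ := potential_bound K hK α b hb ρ' hρ'pos
    have h1 : potential K α b ρ' = (K : ℝ) * ((K : ℝ) - 1) :=
      hiff'.mpr fun i j => by rw [hξ' i, hξ' j]
    have heq : potential K α b ρ = (K : ℝ) * ((K : ℝ) - 1) :=
      le_antisymm (h1 ▸ hmin ρ' hρ'pos) hlb
    have hc := hiff.mp heq
    have hK0 : 0 < K := by omega
    exact ⟨xi K α b ρ ⟨0, hK0⟩, fun k => hc k ⟨0, hK0⟩⟩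
  · rintro ⟨c, hc⟩ ρ' hρ'pos
    have heq : potential K α b ρ = (K : ℝ) * ((K : ℝ) - 1) :=
      hiff.mpr fun i j => by show ρ i * b i ^ α = ρ j * b j ^ α; rw [hc i, hc j]
    rw [heq]
    exact (potential_bound K hK α b hb ρ' hρ'pos).1
end

section
/- Strict potential decrease under strict unilateral improvement. For every user k, every power profile ρ : Fin K → ℝ with all entries positive, every ρ'_k > 0, and every ε > 0: if μ_k(ρ) − μ_k(Function.update ρ k ρ'_k) > ε, then u(ρ) − u(Function.update ρ k ρ'_k) > ε; i.e., any unilateral power update that improves a user's payoff by more than ε decreases the potential function by more than ε. -/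
/-- Strict potential decrease under strict unilateral improvement: any
    unilateral power update improving a user's payoff by more than ε decreases
    the potential by more than ε. -/
theorem potential_strict_decrease (K : ℕ) (hK : 2 ≤ K) (α : ℝ)
    (b : Fin K → ℝ) (hb : ∀ k, 0 < b k) (k : Fin K) (ρ : Fin K → ℝ)
    (hρ : ∀ i, 0 < ρ i) (ρ'k : ℝ) (hρ'k : 0 < ρ'k) (ε : ℝ) (hε : 0 < ε)
    (himp : mu K α b ρ k - mu K α b (Function.update ρ k ρ'k) k > ε) :
    potential K α b ρ - potential K α b (Function.update ρ k ρ'k) > ε := by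
  set ρ' := Function.update ρ k ρ'k with hρ'def
  -- positivity of xi
  have hx : ∀ i, 0 < xi K α b ρ i := fun i =>
    mul_pos (hρ i) (Real.rpow_pos_of_pos (hb i) α)
  have hρ'pos : ∀ i, 0 < ρ' i := by
    intro i
    by_cases h : i = k
    · subst h; simpa [hρ'def] using hρ'k
    · simpa [hρ'def, Function.update_of_ne h] using hρ i
  have hx' : ∀ i, 0 < xi K α b ρ' i := fun i =>
    mul_pos (hρ'pos i) (Real.rpow_pos_of_pos (hb i) α)
  have hxeq : ∀ i, i ≠ k → xi K α b ρ' i = xi K α b ρ i := by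
    intro i hi
    simp [xi, hρ'def, Function.update_of_ne hi]
  set s := Finset.univ.erase k with hs
  set x := xi K α b ρ k with hxdef
  set y := xi K α b ρ' k with hydef
  set A := ∑ i ∈ s, xi K α b ρ i with hA
  set B := ∑ i ∈ s, 1 / xi K α b ρ i with hB
  have hxne : x ≠ 0 := ne_of_gt (hx k)
  have hyne : y ≠ 0 := ne_of_gt (hx' k)
  have hA' : ∑ i ∈ s, xi K α b ρ' i = A := by
    apply Finset.sum_congr rfl
    intro i hi
    exact hxeq i (Finset.ne_of_mem_erase hi)
  have hB' : ∑ i ∈ s, 1 / xi K α b ρ' i = B := by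
    apply Finset.sum_congr rfl
    intro i hi
    rw [hxeq i (Finset.ne_of_mem_erase hi)]
  have hmuk : mu K α b ρ k = A / x + x * B := rfl
  have hmuk' : mu K α b ρ' k = A / y + y * B := by
    rw [mu, ← hydef, ← hs, hA', hB']
  -- per-user difference for j ≠ k
  have hterm : ∀ j ∈ s, mu K α b ρ j - mu K α b ρ' j
      = (x - y) * (1 / xi K α b ρ j) + xi K α b ρ j * (1 / x - 1 / y) := by
    intro j hj
    have hjk : j ≠ k := Finset.ne_of_mem_erase hj
    have hkmem : k ∈ Finset.univ.erase j := by
      simp [Ne.symm hjk]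
    have h1 : ∑ i ∈ Finset.univ.erase j, xi K α b ρ i
        = x + ∑ i ∈ (Finset.univ.erase j).erase k, xi K α b ρ i := by
      rw [Finset.add_sum_erase _ _ hkmem]
    have h1' : ∑ i ∈ Finset.univ.erase j, xi K α b ρ' i
        = y + ∑ i ∈ (Finset.univ.erase j).erase k, xi K α b ρ i := by
      rw [← Finset.add_sum_erase _ _ hkmem]
      congr 1
      apply Finset.sum_congr rfl
      intro i hi
      exact hxeq i (Finset.ne_of_mem_erase hi)
    have h2 : ∑ i ∈ Finset.univ.erase j, 1 / xi K α b ρ i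
        = 1 / x + ∑ i ∈ (Finset.univ.erase j).erase k, 1 / xi K α b ρ i :=
      (Finset.add_sum_erase _ (fun i => 1 / xi K α b ρ i) hkmem).symm
    have h2' : ∑ i ∈ Finset.univ.erase j, 1 / xi K α b ρ' i
        = 1 / y + ∑ i ∈ (Finset.univ.erase j).erase k, 1 / xi K α b ρ i := by
      rw [← Finset.add_sum_erase _ (fun i => 1 / xi K α b ρ' i) hkmem]
      congr 1
      apply Finset.sum_congr rfl
      intro i hi
      rw [hxeq i (Finset.ne_of_mem_erase hi)]
    have hxj : xi K α b ρ' j = xi K α b ρ j := hxeq j hjk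
    rw [mu, mu, h1, h1', h2, h2', hxj]
    ring
  have hsum : ∑ j ∈ s, mu K α b ρ j - ∑ j ∈ s, mu K α b ρ' j
      = mu K α b ρ k - mu K α b ρ' k := by
    rw [← Finset.sum_sub_distrib, Finset.sum_congr rfl hterm,
      Finset.sum_add_distrib, ← Finset.mul_sum, ← Finset.sum_mul,
      ← hB, ← hA, hmuk, hmuk']
    field_simp
    ring
  have hkey : potential K α b ρ - potential K α b ρ'
      = mu K α b ρ k - mu K α b ρ' k := by
    rw [potential, potential,
      ← Finset.add_sum_erase _ _ (Finset.mem_univ k),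
      ← Finset.add_sum_erase _ _ (Finset.mem_univ k), ← hs]
    linarith [hsum]
  linarith [hkey, himp]
end
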